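/- If u ∈ L₁^m[0,T] satisfies max{‖u‖₁, T} ≤ R, then for any nonnegative integers r₀,…,r_m with sum k, |E_{x₀^{r₀} ⧢ ⋯ ⧢ x_m^{r_m}}[u](t)| ≤ R^k/(r₀! r₁! ⋯ r_m!) for all 0 ≤ t ≤ T. -/

import Mathlib

open MeasureTheory

/-- Words over the alphabet `X = {x_0, …, x_m}`. -/
abbrev Word (m : ℕ) := List (Fin (m+1))

/-- Extension of an input `u : [0,T] → ℝ^m` by the convention `u₀ ≡ 1`. -/
noncomputable def uext {m : ℕ} (u : Fin m → ℝ → ℝ) : Fin (m+1) → ℝ → ℝ :=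
  Fin.cases (fun _ => (1 : ℝ)) u

/-- Iterated integrals: `E_∅[u](t) = 1` and
`E_{x_i η̄}[u](t) = ∫₀ᵗ u_i(τ) E_{η̄}[u](τ) dτ` (with `u₀ ≡ 1`). -/
noncomputable def E {m : ℕ} (u : Fin m → ℝ → ℝ) : Word m → ℝ → ℝ
  | [] => fun _ => 1
  | i :: η => fun t => ∫ τ in (0 : ℝ)..t, uext u i τ * E u η τ
/-- The shuffle product of two words, as an element of `ℝ⟨X⟩` (represented as a finitely
supported function `X* →₀ ℝ`), defined by the recursion
`(x_i η) ⧢ (x_j ξ) = x_i (η ⧢ (x_j ξ)) + x_j ((x_i η) ⧢ ξ)` and `η ⧢ ∅ = ∅ ⧢ η = η`. -/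
noncomputable def shW {m : ℕ} : Word m → Word m → (Word m →₀ ℝ)
  | [], ξ => Finsupp.single ξ 1
  | η, [] => Finsupp.single η 1
  | a :: η, b :: ξ =>
      Finsupp.mapDomain (List.cons a) (shW η (b :: ξ)) +
      Finsupp.mapDomain (List.cons b) (shW (a :: η) ξ)
  termination_by η ξ => η.length + ξ.length
  decreasing_by all_goals (simp [List.length_cons]; try omega)

/-- Bilinear extension of the shuffle product to polynomials in `ℝ⟨X⟩`. -/
noncomputable def shP {m : ℕ} (p q : Word m →₀ ℝ) : Word m →₀ ℝ :=
  p.sum fun η a => q.sum fun ξ b => (a * b) • shW η ξ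

/-- The iterated shuffle product `x₀^{r₀} ⧢ x₁^{r₁} ⧢ ⋯ ⧢ x_m^{r_m}`. -/
noncomputable def shufflePowers {m : ℕ} (r : Fin (m+1) → ℕ) : Word m →₀ ℝ :=
  (List.ofFn fun j : Fin (m+1) => List.replicate (r j) j).foldr
    (fun w p => shP (Finsupp.single w 1) p) (Finsupp.single ([] : Word m) 1)

/-- Linear extension of `E` to polynomials: `E_p[u] = Σ_η (p,η) E_η[u]`. -/
noncomputable def Ep {m : ℕ} (p : Word m →₀ ℝ) (u : Fin m → ℝ → ℝ) (t : ℝ) : ℝ :=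
  p.sum fun η a => a * E u η t

section
open MeasureTheory Set

lemma int_mul_cont {T : ℝ} {f G : ℝ → ℝ} (hf : IntegrableOn f (Icc 0 T))
    (hG : ContinuousOn G (Icc 0 T)) : IntegrableOn (fun x => f x * G x) (Icc 0 T) := by
  obtain ⟨C, hC⟩ := isCompact_Icc.exists_bound_of_continuousOn hG
  refine Integrable.mono' (hf.norm.mul_const C)
    (hf.aestronglyMeasurable.mul (hG.aestronglyMeasurable measurableSet_Icc))
    (ae_restrict_of_forall_mem measurableSet_Icc fun x hx => ?_)
  calc ‖f x * G x‖ = ‖f x‖ * ‖G x‖ := norm_mul _ _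
    _ ≤ ‖f x‖ * C := by
        exact mul_le_mul_of_nonneg_left (hC x hx) (norm_nonneg _)

lemma subII {T : ℝ} {f : ℝ → ℝ} (hf : IntegrableOn f (Icc 0 T)) {t : ℝ}
    (ht : t ∈ Icc 0 T) : IntervalIntegrable f volume 0 t := by
  have : Icc 0 t ⊆ Icc 0 T := Icc_subset_Icc le_rfl ht.2
  exact (hf.mono_set ((uIcc_of_le ht.1) ▸ this : uIcc 0 t ⊆ Icc 0 T)).intervalIntegrable

lemma key_swap {t : ℝ} {f g : ℝ → ℝ}
    (hf : IntegrableOn f (Ioc 0 t)) (hg : IntegrableOn g (Ioc 0 t)) :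
    ∫ x in Ioc 0 t, f x * (∫ y in Ioc x t, g y) =
    ∫ y in Ioc 0 t, g y * (∫ x in Ioc 0 y, f x) := by
  set μ := volume.restrict (Ioc (0:ℝ) t) with hμ
  set h : ℝ → ℝ → ℝ := fun x y => (Ioi x).indicator (fun y => f x * g y) y with hh
  have hmeas : AEStronglyMeasurable (Function.uncurry h) (μ.prod μ) := by
    have : Function.uncurry h = ({p : ℝ × ℝ | p.1 < p.2}).indicator
        (fun p => f p.1 * g p.2) := by
      ext p
      obtain ⟨x, y⟩ := p
      simp [Function.uncurry, hh, Set.indicator, Set.mem_Ioi]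
    rw [this]
    exact (hf.aestronglyMeasurable.comp_fst.mul hg.aestronglyMeasurable.comp_snd).indicator
      ((isOpen_lt continuous_fst continuous_snd).measurableSet)
  have hint : Integrable (Function.uncurry h) (μ.prod μ) := by
    refine Integrable.mono' (Integrable.mul_prod hf.norm hg.norm) hmeas (ae_of_all _ fun p => ?_)
    obtain ⟨x, y⟩ := p
    simp only [Function.uncurry_apply_pair, hh]
    refine (norm_indicator_le_norm_self _ _).trans ?_
    rw [norm_mul]
  have lhs : ∀ x ∈ Ioc (0:ℝ) t, (∫ y, h x y ∂μ) = f x * (∫ y in Ioc x t, g y) := by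
    intro x hx
    rw [hμ, hh]
    rw [integral_indicator measurableSet_Ioi, Measure.restrict_restrict measurableSet_Ioi]
    have : Ioi x ∩ Ioc 0 t = Ioc x t := by
      ext y; simp only [mem_inter_iff, mem_Ioi, mem_Ioc]
      constructor
      · rintro ⟨h1, _, h3⟩; exact ⟨h1, h3⟩
      · rintro ⟨h1, h2⟩; exact ⟨h1, lt_trans hx.1 h1, h2⟩
    rw [this, integral_const_mul]
  have rhs : ∀ y ∈ Ioc (0:ℝ) t, (∫ x, h x y ∂μ) = g y * (∫ x in Ioc 0 y, f x) := by
    intro y hy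
    have : (fun x => h x y) = (Iio y).indicator (fun x => f x * g y) := by
      ext x
      simp [hh, Set.indicator, Set.mem_Ioi, Set.mem_Iio]
    rw [hμ, this, integral_indicator measurableSet_Iio,
      Measure.restrict_restrict measurableSet_Iio]
    have : Iio y ∩ Ioc 0 t = Ioo 0 y := by
      ext x; simp only [mem_inter_iff, mem_Iio, mem_Ioc, mem_Ioo]
      constructor
      · rintro ⟨h1, h2, _⟩; exact ⟨h2, h1⟩
      · rintro ⟨h1, h2⟩; exact ⟨h2, h1, le_trans (le_of_lt h2) hy.2⟩
    rw [this, integral_mul_const, ← integral_Ioc_eq_integral_Ioo, mul_comm]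
  calc ∫ x in Ioc 0 t, f x * (∫ y in Ioc x t, g y)
      = ∫ x, (∫ y, h x y ∂μ) ∂μ := by
        refine (setIntegral_congr_fun measurableSet_Ioc fun x hx => ?_).symm
        exact lhs x hx
    _ = ∫ y, (∫ x, h x y ∂μ) ∂μ := integral_integral_swap hint
    _ = ∫ y in Ioc 0 t, g y * (∫ x in Ioc 0 y, f x) := by
        refine setIntegral_congr_fun measurableSet_Ioc fun y hy => ?_
        exact rhs y hy

lemma primitive_cont {T : ℝ} {f : ℝ → ℝ} (hf : IntegrableOn f (Icc 0 T)) :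
    ContinuousOn (fun x => ∫ s in (0:ℝ)..x, f s) (Icc 0 T) :=
  (intervalIntegral.continuousOn_primitive hf).congr fun x hx => intervalIntegral.integral_of_le hx.1

lemma parts {T : ℝ} {f g : ℝ → ℝ} (hf : IntegrableOn f (Icc 0 T))
    (hg : IntegrableOn g (Icc 0 T)) {t : ℝ} (ht : t ∈ Icc 0 T) :
    (∫ τ in (0:ℝ)..t, f τ) * (∫ τ in (0:ℝ)..t, g τ) =
      ∫ τ in (0:ℝ)..t, ((f τ * ∫ s in (0:ℝ)..τ, g s) + g τ * ∫ s in (0:ℝ)..τ, f s) := by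
  obtain ⟨ht0, htT⟩ := ht
  have hsub : Ioc (0:ℝ) t ⊆ Icc 0 T := fun x hx => ⟨le_of_lt hx.1, le_trans hx.2 htT⟩
  have hf' : IntegrableOn f (Ioc 0 t) := hf.mono_set hsub
  have hg' : IntegrableOn g (Ioc 0 t) := hg.mono_set hsub
  have hFc : ContinuousOn (fun x => ∫ s in (0:ℝ)..x, f s) (Icc 0 T) := primitive_cont hf
  have hGc : ContinuousOn (fun x => ∫ s in (0:ℝ)..x, g s) (Icc 0 T) := primitive_cont hg
  have hfG : IntegrableOn (fun τ => f τ * ∫ s in (0:ℝ)..τ, g s) (Ioc 0 t) :=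
    (int_mul_cont hf hGc).mono_set hsub
  have hgF : IntegrableOn (fun τ => g τ * ∫ s in (0:ℝ)..τ, f s) (Ioc 0 t) :=
    (int_mul_cont hg hFc).mono_set hsub
  rw [intervalIntegral.integral_of_le ht0, intervalIntegral.integral_of_le ht0,
    intervalIntegral.integral_of_le ht0, integral_add hfG hgF]
  have e1 : (∫ τ in Ioc (0:ℝ) t, f τ * ∫ s in (0:ℝ)..τ, g s)
      = ∫ τ in Ioc (0:ℝ) t, f τ * ∫ s in Ioc (0:ℝ) τ, g s :=
    setIntegral_congr_fun measurableSet_Ioc fun τ hτ => by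
      rw [intervalIntegral.integral_of_le (le_of_lt hτ.1)]
  have e2 : (∫ τ in Ioc (0:ℝ) t, g τ * ∫ s in (0:ℝ)..τ, f s)
      = ∫ τ in Ioc (0:ℝ) t, g τ * ∫ s in Ioc (0:ℝ) τ, f s :=
    setIntegral_congr_fun measurableSet_Ioc fun τ hτ => by
      rw [intervalIntegral.integral_of_le (le_of_lt hτ.1)]
  rw [e1, e2]
  have hfG' : IntegrableOn (fun τ => f τ * ∫ s in Ioc (0:ℝ) τ, g s) (Ioc 0 t) :=
    hfG.congr_fun (fun τ hτ => by
      simp only [intervalIntegral.integral_of_le (le_of_lt hτ.1)]) measurableSet_Ioc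
  have hgF' : IntegrableOn (fun τ => g τ * ∫ s in Ioc (0:ℝ) τ, f s) (Ioc 0 t) :=
    hgF.congr_fun (fun τ hτ => by
      simp only [intervalIntegral.integral_of_le (le_of_lt hτ.1)]) measurableSet_Ioc
  have split : ∀ x ∈ Ioc (0:ℝ) t,
      (∫ s in Ioc (0:ℝ) t, g s) = (∫ s in Ioc (0:ℝ) x, g s) + ∫ s in Ioc x t, g s := by
    intro x hx
    rw [← setIntegral_union (Ioc_disjoint_Ioc_of_le le_rfl) measurableSet_Ioc
      (hg'.mono_set (Ioc_subset_Ioc_right hx.2))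
      (hg'.mono_set (Ioc_subset_Ioc_left (le_of_lt hx.1))),
      Ioc_union_Ioc_eq_Ioc (le_of_lt hx.1) hx.2]
  have h2 : IntegrableOn (fun x => f x * ∫ s in Ioc x t, g s) (Ioc 0 t) := by
    refine IntegrableOn.congr_fun
      (f := fun x => f x * (∫ s in Ioc (0:ℝ) t, g s) - f x * ∫ s in Ioc (0:ℝ) x, g s)
      ?_ (fun x hx => by rw [split x hx]; ring) measurableSet_Ioc
    exact (hf'.mul_const _).sub hfG'
  calc (∫ x in Ioc (0:ℝ) t, f x) * (∫ s in Ioc (0:ℝ) t, g s)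
      = ∫ x in Ioc (0:ℝ) t, f x * (∫ s in Ioc (0:ℝ) t, g s) :=
        (integral_mul_const _ _).symm
    _ = ∫ x in Ioc (0:ℝ) t,
          ((f x * ∫ s in Ioc (0:ℝ) x, g s) + f x * ∫ s in Ioc x t, g s) :=
        setIntegral_congr_fun measurableSet_Ioc fun x hx => by rw [split x hx, mul_add]
    _ = (∫ x in Ioc (0:ℝ) t, f x * ∫ s in Ioc (0:ℝ) x, g s)
          + ∫ x in Ioc (0:ℝ) t, f x * ∫ s in Ioc x t, g s := integral_add hfG' h2
    _ = (∫ x in Ioc (0:ℝ) t, f x * ∫ s in Ioc (0:ℝ) x, g s)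
          + ∫ y in Ioc (0:ℝ) t, g y * ∫ s in Ioc (0:ℝ) y, f s := by
        rw [key_swap hf' hg']

end

section
open MeasureTheory Set
variable {m : ℕ} {T : ℝ} {u : Fin m → ℝ → ℝ}

lemma E_cons (i : Fin (m+1)) (η : Word m) (t : ℝ) :
    E u (i :: η) t = ∫ τ in (0:ℝ)..t, uext u i τ * E u η τ := rfl

lemma E_nil (t : ℝ) : E u ([] : Word m) t = 1 := rfl

lemma uext_int (hu : ∀ i, IntegrableOn (u i) (Icc 0 T)) (i : Fin (m+1)) :
    IntegrableOn (uext u i) (Icc 0 T) := by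
  induction i using Fin.cases with
  | zero =>
      have : uext u 0 = fun _ : ℝ => (1:ℝ) := rfl
      rw [this]
      exact integrableOn_const measure_Icc_lt_top.ne
  | succ i => exact hu i

lemma E_cont (hu : ∀ i, IntegrableOn (u i) (Icc 0 T)) :
    ∀ η : Word m, ContinuousOn (E u η) (Icc 0 T)
  | [] => continuousOn_const
  | (i :: η) => by
      have h := int_mul_cont (uext_int hu i) (E_cont hu η)
      exact (primitive_cont h).congr fun x _ => rfl

lemma E_int (hu : ∀ i, IntegrableOn (u i) (Icc 0 T)) (η : Word m) (i : Fin (m+1)) :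
    IntegrableOn (fun τ => uext u i τ * E u η τ) (Icc 0 T) :=
  int_mul_cont (uext_int hu i) (E_cont hu η)

lemma E_int2 (hu : ∀ i, IntegrableOn (u i) (Icc 0 T)) (i : Fin (m+1)) (η ξ : Word m) :
    IntegrableOn (fun τ => uext u i τ * (E u η τ * E u ξ τ)) (Icc 0 T) :=
  (int_mul_cont (E_int hu η i) (E_cont hu ξ)).congr_fun
    (fun τ _ => (mul_assoc _ _ _)) measurableSet_Icc

lemma Ep_zero (t : ℝ) : Ep (0 : Word m →₀ ℝ) u t = 0 := Finsupp.sum_zero_index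

lemma Ep_add (p q : Word m →₀ ℝ) (t : ℝ) : Ep (p + q) u t = Ep p u t + Ep q u t :=
  Finsupp.sum_add_index' (fun _ => zero_mul _) (fun _ a b => add_mul a b _)

lemma Ep_single (η : Word m) (c : ℝ) (t : ℝ) :
    Ep (Finsupp.single η c) u t = c * E u η t :=
  Finsupp.sum_single_index (zero_mul _)

lemma Ep_smul (c : ℝ) (p : Word m →₀ ℝ) (t : ℝ) : Ep (c • p) u t = c * Ep p u t := by
  unfold Ep
  rw [Finsupp.sum_smul_index (h := fun η a => a * E u η t) (fun _ => zero_mul _),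
    Finsupp.mul_sum]
  exact Finsupp.sum_congr fun η _ => by ring

lemma Ep_finsetSum {ι : Type*} (s : Finset ι) (F : ι → (Word m →₀ ℝ)) (t : ℝ) :
    Ep (∑ i ∈ s, F i) u t = ∑ i ∈ s, Ep (F i) u t := by
  classical
  induction s using Finset.induction with
  | empty => simp [Ep_zero]
  | insert _ _ hx ih =>
      rw [Finset.sum_insert hx, Finset.sum_insert hx, Ep_add, ih]

lemma Ep_finsuppSum {α : Type*} (p : α →₀ ℝ) (F : α → ℝ → (Word m →₀ ℝ)) (t : ℝ) :
    Ep (p.sum F) u t = p.sum fun a c => Ep (F a c) u t := by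
  rw [Finsupp.sum, Finsupp.sum, Ep_finsetSum]

lemma Ep_mapDomain (a : Fin (m+1)) (p : Word m →₀ ℝ) (t : ℝ) :
    Ep (Finsupp.mapDomain (List.cons a) p) u t = p.sum fun η c => c * E u (a :: η) t :=
  Finsupp.sum_mapDomain_index (fun _ => zero_mul _) (fun _ c d => add_mul c d _)

lemma Ep_primitive (hu : ∀ i, IntegrableOn (u i) (Icc 0 T)) (a : Fin (m+1))
    (p : Word m →₀ ℝ) {t : ℝ} (ht : t ∈ Icc 0 T) :
    (p.sum fun η c => c * E u (a :: η) t) = ∫ τ in (0:ℝ)..t, uext u a τ * Ep p u τ := by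
  rw [Finsupp.sum]
  have step : ∀ η ∈ p.support, p η * E u (a :: η) t
      = ∫ τ in (0:ℝ)..t, p η * (uext u a τ * E u η τ) := by
    intro η _
    rw [intervalIntegral.integral_const_mul, E_cons]
  rw [Finset.sum_congr rfl step, ← intervalIntegral.integral_finset_sum]
  · apply intervalIntegral.integral_congr
    intro τ _
    show (∑ η ∈ p.support, p η * (uext u a τ * E u η τ)) = uext u a τ * Ep p u τ
    unfold Ep
    rw [Finsupp.sum, Finset.mul_sum]
    exact Finset.sum_congr rfl fun η _ => by ring
  · intro η _
    exact (subII (E_int hu η a) ht).const_mul _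

end

section
open MeasureTheory Set
variable {m : ℕ} {T : ℝ} {u : Fin m → ℝ → ℝ}

lemma Ep_shW (hu : ∀ i, IntegrableOn (u i) (Icc 0 T)) :
    ∀ (η ξ : Word m) {t : ℝ}, t ∈ Icc 0 T → Ep (shW η ξ) u t = E u η t * E u ξ t
  | [], ξ, t, ht => by
      simp [shW, Ep_single, E_nil]
  | (a :: η), [], t, ht => by
      simp [shW, Ep_single, E_nil]
  | (a :: η), (b :: ξ), t, ht => by
      have hsub : Icc 0 t ⊆ Icc (0:ℝ) T := Icc_subset_Icc le_rfl ht.2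
      have huIcc : uIcc (0:ℝ) t = Icc 0 t := uIcc_of_le ht.1
      rw [shW, Ep_add, Ep_mapDomain, Ep_mapDomain,
        Ep_primitive hu a _ ht, Ep_primitive hu b _ ht]
      have I1 : (∫ τ in (0:ℝ)..t, uext u a τ * Ep (shW η (b :: ξ)) u τ)
          = ∫ τ in (0:ℝ)..t, uext u a τ * (E u η τ * E u (b :: ξ) τ) := by
        apply intervalIntegral.integral_congr
        intro τ hτ
        simp only [Ep_shW hu η (b :: ξ) (hsub (huIcc ▸ hτ))]
      have I2 : (∫ τ in (0:ℝ)..t, uext u b τ * Ep (shW (a :: η) ξ) u τ)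
          = ∫ τ in (0:ℝ)..t, uext u b τ * (E u (a :: η) τ * E u ξ τ) := by
        apply intervalIntegral.integral_congr
        intro τ hτ
        simp only [Ep_shW hu (a :: η) ξ (hsub (huIcc ▸ hτ))]
      rw [I1, I2]
      have P := parts (E_int hu η a) (E_int hu ξ b) ht
      rw [E_cons a η t, E_cons b ξ t, P,
        ← intervalIntegral.integral_add
          (subII (E_int2 hu a η (b :: ξ)) ht) (subII (E_int2 hu b (a :: η) ξ) ht)]
      apply intervalIntegral.integral_congr
      intro τ _
      simp only [E_cons]
      ring
  termination_by η ξ => η.length + ξ.length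
  decreasing_by all_goals (simp [List.length_cons]; try omega)

lemma Ep_shP (hu : ∀ i, IntegrableOn (u i) (Icc 0 T)) (p q : Word m →₀ ℝ)
    {t : ℝ} (ht : t ∈ Icc 0 T) : Ep (shP p q) u t = Ep p u t * Ep q u t := by
  unfold shP
  rw [Ep_finsuppSum]
  conv_rhs => rw [Ep]
  rw [Finsupp.sum_mul]
  refine Finsupp.sum_congr fun η _ => ?_
  rw [Ep_finsuppSum, Ep, Finsupp.mul_sum]
  refine Finsupp.sum_congr fun ξ _ => ?_
  rw [Ep_smul, Ep_shW hu η ξ ht]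
  ring

end

section
open MeasureTheory Set
variable {m : ℕ} {T : ℝ} {u : Fin m → ℝ → ℝ}

lemma pow_primitive_cont (hu : ∀ i, IntegrableOn (u i) (Icc 0 T)) (j : Fin (m+1)) (n : ℕ) :
    ContinuousOn (fun τ : ℝ => (∫ s in (0:ℝ)..τ, uext u j s) ^ n) (Icc 0 T) :=
  (primitive_cont (uext_int hu j)).pow n

lemma D_int (hu : ∀ i, IntegrableOn (u i) (Icc 0 T)) (j : Fin (m+1)) (n : ℕ) :
    IntegrableOn (fun τ => uext u j τ * (∫ s in (0:ℝ)..τ, uext u j s) ^ n) (Icc 0 T) :=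
  int_mul_cont (uext_int hu j) (pow_primitive_cont hu j n)

lemma D_lemma (hu : ∀ i, IntegrableOn (u i) (Icc 0 T)) (j : Fin (m+1)) :
    ∀ (n : ℕ) {t : ℝ}, t ∈ Icc 0 T →
      (∫ τ in (0:ℝ)..t, uext u j τ * (∫ s in (0:ℝ)..τ, uext u j s) ^ n)
        = (∫ s in (0:ℝ)..t, uext u j s) ^ (n+1) / (n+1) := by
  intro n
  induction n with
  | zero => intro t ht; simp
  | succ n ih =>
      intro t ht
      have hsub : ∀ τ ∈ uIcc (0:ℝ) t, τ ∈ Icc (0:ℝ) T := by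
        intro τ hτ
        rw [uIcc_of_le ht.1] at hτ
        exact ⟨hτ.1, hτ.2.trans ht.2⟩
      have base := parts (uext_int hu j) (D_int hu j n) ht
      rw [ih ht] at base
      have base2 : (∫ τ in (0:ℝ)..t,
            ((uext u j τ * ∫ s in (0:ℝ)..τ,
                uext u j s * (∫ s' in (0:ℝ)..s, uext u j s') ^ n)
              + (uext u j τ * (∫ s in (0:ℝ)..τ, uext u j s) ^ n)
                  * ∫ s in (0:ℝ)..τ, uext u j s))
          = ∫ τ in (0:ℝ)..t,
              ((1/((n:ℝ)+1)) * (uext u j τ * (∫ s in (0:ℝ)..τ, uext u j s) ^ (n+1))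
                + uext u j τ * (∫ s in (0:ℝ)..τ, uext u j s) ^ (n+1)) := by
        apply intervalIntegral.integral_congr
        intro τ hτ
        simp only [ih (hsub τ hτ)]
        ring
      rw [base2, intervalIntegral.integral_add
          ((subII (D_int hu j (n+1)) ht).const_mul _) (subII (D_int hu j (n+1)) ht),
        intervalIntegral.integral_const_mul] at base
      have hne : ((n:ℝ)+1) ≠ 0 := by positivity
      have hne2 : ((n:ℝ)+1+1) ≠ 0 := by positivity
      have hcast : ((n+1 : ℕ) : ℝ) + 1 = (n:ℝ) + 1 + 1 := by push_cast; ring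
      rw [hcast]
      field_simp at base ⊢
      linear_combination -base

lemma E_replicate (hu : ∀ i, IntegrableOn (u i) (Icc 0 T)) (j : Fin (m+1)) :
    ∀ (n : ℕ) {t : ℝ}, t ∈ Icc 0 T →
      E u (List.replicate n j) t
        = (∫ s in (0:ℝ)..t, uext u j s) ^ n / (Nat.factorial n : ℝ) := by
  intro n
  induction n with
  | zero => intro t ht; simp [E_nil]
  | succ n ih =>
      intro t ht
      have hsub : ∀ τ ∈ uIcc (0:ℝ) t, τ ∈ Icc (0:ℝ) T := by
        intro τ hτ
        rw [uIcc_of_le ht.1] at hτ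
        exact ⟨hτ.1, hτ.2.trans ht.2⟩
      rw [List.replicate_succ, E_cons]
      have e1 : (∫ τ in (0:ℝ)..t, uext u j τ * E u (List.replicate n j) τ)
          = ∫ τ in (0:ℝ)..t, (1/(Nat.factorial n : ℝ))
              * (uext u j τ * (∫ s in (0:ℝ)..τ, uext u j s) ^ n) := by
        apply intervalIntegral.integral_congr
        intro τ hτ
        simp only [ih (hsub τ hτ)]
        ring
      rw [e1, intervalIntegral.integral_const_mul, D_lemma hu j n ht, Nat.factorial_succ]
      have h1 : (Nat.factorial n : ℝ) ≠ 0 := Nat.cast_ne_zero.2 (Nat.factorial_ne_zero n)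
      have h2 : ((n:ℝ)+1) ≠ 0 := by positivity
      rw [one_div, inv_mul_eq_div, div_div]
      push_cast
      ring_nf

end

section
open MeasureTheory Set
variable {m : ℕ} {T : ℝ} {u : Fin m → ℝ → ℝ}

lemma Ep_foldr (hu : ∀ i, IntegrableOn (u i) (Icc 0 T)) :
    ∀ (l : List (Word m)) {t : ℝ}, t ∈ Icc 0 T →
      Ep (l.foldr (fun w p => shP (Finsupp.single w 1) p)
          (Finsupp.single ([] : Word m) 1)) u t
        = (l.map (fun w => E u w t)).prod
  | [], t, ht => by simp [Ep_single, E_nil]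
  | (w :: l), t, ht => by
      simp only [List.foldr_cons, List.map_cons, List.prod_cons]
      rw [Ep_shP hu _ _ ht, Ep_single, one_mul, Ep_foldr hu l ht]

end

theorem stmt9' {m : ℕ} (T R : ℝ) (hT : 0 ≤ T) (u : Fin m → ℝ → ℝ)
    (hu : ∀ i, MeasureTheory.IntegrableOn (u i) (Set.Icc 0 T))
    (hu1 : ∀ i, (∫ τ in (0 : ℝ)..T, |u i τ|) ≤ R) (hTR : T ≤ R)
    (r : Fin (m+1) → ℕ) (t : ℝ) (ht : t ∈ Set.Icc 0 T) :
    |Ep (shufflePowers r) u t| ≤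
      R ^ (∑ j : Fin (m+1), r j) / ∏ j : Fin (m+1), (Nat.factorial (r j) : ℝ) := by
  have hR0 : (0:ℝ) ≤ R := le_trans hT hTR
  have hAj : ∀ j : Fin (m+1), |∫ s in (0:ℝ)..t, uext u j s| ≤ R := by
    intro j
    induction j using Fin.cases with
    | zero =>
        have : (∫ s in (0:ℝ)..t, uext u 0 s) = t := by
          have h1 : uext u (0 : Fin (m+1)) = fun _ : ℝ => (1:ℝ) := rfl
          rw [h1]; simp
        rw [this, abs_of_nonneg ht.1]
        exact le_trans ht.2 hTR
    | succ i =>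
        have h1 : uext u i.succ = u i := rfl
        rw [h1]
        calc |∫ s in (0:ℝ)..t, u i s| ≤ ∫ s in (0:ℝ)..t, |u i s| :=
              intervalIntegral.abs_integral_le_integral_abs ht.1
          _ ≤ ∫ s in (0:ℝ)..T, |u i s| := by
              apply intervalIntegral.integral_mono_interval le_rfl ht.1 ht.2
              · exact Filter.Eventually.of_forall fun x => abs_nonneg _
              · exact subII (hu i).abs ⟨hT, le_rfl⟩
          _ ≤ R := hu1 i
  have main : Ep (shufflePowers r) u t
      = ∏ j : Fin (m+1),
          (∫ s in (0:ℝ)..t, uext u j s) ^ (r j) / (Nat.factorial (r j) : ℝ) := by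
    rw [shufflePowers, Ep_foldr hu _ ht, List.map_ofFn, List.prod_ofFn]
    exact Finset.prod_congr rfl fun j _ => E_replicate hu j (r j) ht
  rw [main, Finset.abs_prod]
  calc (∏ j : Fin (m+1), |(∫ s in (0:ℝ)..t, uext u j s) ^ (r j) / (Nat.factorial (r j) : ℝ)|)
      ≤ ∏ j : Fin (m+1), R ^ (r j) / (Nat.factorial (r j) : ℝ) := by
        apply Finset.prod_le_prod (fun j _ => abs_nonneg _)
        intro j _
        rw [abs_div, abs_pow, Nat.abs_cast]
        have hfac : (0:ℝ) < (Nat.factorial (r j) : ℝ) :=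
          Nat.cast_pos.2 (Nat.factorial_pos _)
        exact (div_le_div_iff_of_pos_right hfac).2 (pow_le_pow_left₀ (abs_nonneg _) (hAj j) _)
    _ = R ^ (∑ j : Fin (m+1), r j) / ∏ j : Fin (m+1), (Nat.factorial (r j) : ℝ) := by
        rw [Finset.prod_div_distrib, Finset.prod_pow_eq_pow_sum]

/-- If `u ∈ L₁^m[0,T]` satisfies `max{‖u‖₁, T} ≤ R`
(`‖u‖₁ = max_i ∫₀ᵀ |u_i|`), then for nonnegative integers `r₀,…,r_m` with sum `k`,
`|E_{x₀^{r₀} ⧢ ⋯ ⧢ x_m^{r_m}}[u](t)| ≤ R^k/(r₀!⋯r_m!)` on `[0,T]`. -/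
theorem stmt9 {m : ℕ} (T R : ℝ) (hT : 0 ≤ T) (u : Fin m → ℝ → ℝ)
    (hu : ∀ i, MeasureTheory.IntegrableOn (u i) (Set.Icc 0 T))
    (hu1 : ∀ i, (∫ τ in (0 : ℝ)..T, |u i τ|) ≤ R) (hTR : T ≤ R)
    (r : Fin (m+1) → ℕ) (t : ℝ) (ht : t ∈ Set.Icc 0 T) :
    |Ep (shufflePowers r) u t| ≤
      R ^ (∑ j : Fin (m+1), r j) / ∏ j : Fin (m+1), (Nat.factorial (r j) : ℝ) := by
  exact stmt9' T R hT u hu hu1 hTR r t ht
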